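/- Let p, s, k, q be positive integers with (s-p)k + p + 1 ≤ q, and let F be a family of k-subsets of {1,...,n} with matching number at most s that contains all k-subsets of {1,...,q}. Then for each 1 ≤ i ≤ k-1, the subfamily F_i = {F ∈ F : |F ∩ [q]| = i} has matching number strictly less than (k-1)(p+1)/(k-i). -/

import Mathlib

open Finset

/-- Coordinatewise (shifting) partial order on finite sets of naturals:
`A ≼ B` iff the increasing enumerations satisfy `aₗ ≤ bₗ` for all `l`. -/
def shiftLE (A B : Finset ℕ) : Prop :=
  List.Forall₂ (· ≤ ·) (A.sort (· ≤ ·)) (B.sort (· ≤ ·))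

/-- A family on the ground set `{1,…,n}` is shifted. -/
def IsShifted (n : ℕ) (F : Finset (Finset ℕ)) : Prop :=
  ∀ B ∈ F, ∀ A ⊆ Finset.Icc 1 n, shiftLE A B → A ∈ F

/-- The matching number of `F` is at most `s`. -/
def MatchingLE (F : Finset (Finset ℕ)) (s : ℕ) : Prop :=
  ∀ M ⊆ F, (M : Set (Finset ℕ)).PairwiseDisjoint id → M.card ≤ s

/-- `F` contains `s` pairwise disjoint members. -/
def HasMatching (F : Finset (Finset ℕ)) (s : ℕ) : Prop :=
  ∃ M ⊆ F, (M : Set (Finset ℕ)).PairwiseDisjoint id ∧ M.card = s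

/-- The clique number of `F` (as a `k`-graph on `{1,…,n}`) is at least `q`. -/
def HasClique (n : ℕ) (F : Finset (Finset ℕ)) (k q : ℕ) : Prop :=
  ∃ Q ⊆ Finset.Icc 1 n, Q.card = q ∧ Q.powersetCard k ⊆ F

/-!
Let `M` be a matching in `F_i` of size `m ≤ s`. Its members use exactly `m i` vertices of
`[q]`, and since every `k`-subset of `[q]` lies in `F`, the remaining `q - m i` vertices of `[q]`
carry `⌊(q - m i) / k⌋` further pairwise disjoint members of `F`, disjoint from `M`. The matching
bound forces `m + ⌊(q - m i) / k⌋ ≤ s`, i.e. `q < m i + (s + 1 - m) k`, and combined with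
`(s - p) k + p + 1 ≤ q` this rearranges to `m (k - i) < (k - 1)(p + 1)`.
-/

theorem exists_pairwiseDisjoint_subset_powersetCard {α : Type*} [DecidableEq α] {k : ℕ}
    (hk : 0 < k) (r : ℕ) (S : Finset α) (hS : r * k ≤ #S) :
    ∃ N ⊆ S.powersetCard k, (N : Set (Finset α)).PairwiseDisjoint id ∧ #N = r := by
  induction r generalizing S with
  | zero => exact ⟨∅, empty_subset _, by simp, rfl⟩
  | succ r ih =>
    rw [add_one_mul] at hS
    obtain ⟨T, hTS, hTk⟩ := exists_subset_card_eq (le_of_add_le_right hS)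
    obtain ⟨N, hN, hNdisj, hNr⟩ := ih (S \ T) (by rw [card_sdiff_of_subset hTS, hTk]; omega)
    have hTN : ∀ U ∈ N, Disjoint T U := fun U hU =>
      disjoint_of_subset_right (mem_powersetCard.1 (hN hU)).1 disjoint_sdiff
    have hT_nonempty : T.Nonempty := card_pos.1 (hTk ▸ hk)
    have hTnotN : T ∉ N := fun hT => hT_nonempty.ne_empty (disjoint_self.1 (hTN T hT))
    refine ⟨insert T N, insert_subset (mem_powersetCard.2 ⟨hTS, hTk⟩) ?_, ?_, ?_⟩
    · exact hN.trans (powersetCard_mono sdiff_subset)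
    · rw [coe_insert]
      exact hNdisj.insert fun U hU _ => hTN U hU
    · rw [card_insert_of_notMem hTnotN, hNr]

theorem card_inter_biUnion_of_card_inter_eq {α : Type*} [DecidableEq α] {M : Finset (Finset α)}
    (hM : (M : Set (Finset α)).PairwiseDisjoint id) {Q : Finset α} {i : ℕ}
    (hi : ∀ A ∈ M, #(A ∩ Q) = i) : #(Q ∩ M.biUnion id) = #M * i := by
  rw [inter_biUnion, card_biUnion, sum_congr rfl fun A hA => inter_comm Q A ▸ hi A hA,
    sum_const, smul_eq_mul]
  exact hM.mono_on fun _ _ => inter_subset_right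

theorem mul_sub_lt_of_le_of_lt {m s p k q i : ℕ} (hms : m ≤ s) (hik : i < k)
    (hq_low : (s - p) * k + p + 1 ≤ q) (hq_high : q < m * i + (s + 1 - m) * k) :
    m * (k - i) < (k - 1) * (p + 1) := by
  have h1 : (s + 1 - m) * k + m * k = (s + 1) * k := by
    rw [← add_mul, Nat.sub_add_cancel (by omega)]
  have h2 : s * k ≤ (s - p) * k + p * k := by
    rw [← add_mul]; exact Nat.mul_le_mul_right _ (by omega)
  have h3 : m * (k - i) + m * i = m * k := by rw [← mul_add, Nat.sub_add_cancel hik.le]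
  have h4 : (k - 1) * (p + 1) + (p + 1) = k * (p + 1) := by
    rw [← add_one_mul, Nat.sub_one_add_one (by omega)]
  linarith

namespace MatchingLE

variable {F : Finset (Finset ℕ)} {s : ℕ}

theorem card_add_card_le (hmatch : MatchingLE F s) {M N : Finset (Finset ℕ)}
    (hMF : M ⊆ F) (hNF : N ⊆ F) (hM : (M : Set (Finset ℕ)).PairwiseDisjoint id)
    (hN : (N : Set (Finset ℕ)).PairwiseDisjoint id) (hN_nonempty : ∀ B ∈ N, B.Nonempty)
    (hMN : ∀ A ∈ M, ∀ B ∈ N, Disjoint A B) : #M + #N ≤ s := by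
  have hdisj : Disjoint M N := disjoint_right.2 fun B hB hBM =>
    (hN_nonempty B hB).ne_empty (disjoint_self.1 (hMN B hBM B hB))
  rw [← card_union_of_disjoint hdisj]
  refine hmatch _ (union_subset hMF hNF) ?_
  rw [coe_union]
  exact hM.union hN fun A hA B hB _ => hMN A hA B hB

theorem card_sdiff_biUnion_lt (hmatch : MatchingLE F s) {k : ℕ} (hk : 0 < k) {Q : Finset ℕ}
    (hQ : Q.powersetCard k ⊆ F) {M : Finset (Finset ℕ)} (hMF : M ⊆ F)
    (hM : (M : Set (Finset ℕ)).PairwiseDisjoint id) :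
    #(Q \ M.biUnion id) < (s + 1 - #M) * k := by
  by_contra! hlarge
  obtain ⟨N, hNQ, hN, hNcard⟩ := exists_pairwiseDisjoint_subset_powersetCard hk _ _ hlarge
  have hN_sub : ∀ B ∈ N, B ⊆ Q \ M.biUnion id ∧ #B = k := fun B hB =>
    mem_powersetCard.1 (hNQ hB)
  have hMN := hmatch.card_add_card_le hMF ((hNQ.trans (powersetCard_mono sdiff_subset)).trans hQ)
    hM hN (fun B hB => card_pos.1 ((hN_sub B hB).2 ▸ hk)) fun A hA B hB =>
      disjoint_of_subset_right (hN_sub B hB).1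
        (disjoint_sdiff.mono_left (subset_biUnion_of_mem id hA))
  have hMs := hmatch M hMF hM
  omega

end MatchingLE

theorem stmt_7_general (p s k q : ℕ)
    (hpq : (s - p) * k + p + 1 ≤ q)
    (F : Finset (Finset ℕ))
    (hmatch : MatchingLE F s)
    (hclq : (Finset.Icc 1 q).powersetCard k ⊆ F) :
    ∀ i, 1 ≤ i → i ≤ k - 1 →
      ∀ M ⊆ F.filter (fun A => (A ∩ Finset.Icc 1 q).card = i),
        (M : Set (Finset ℕ)).PairwiseDisjoint id →
          M.card * (k - i) < (k - 1) * (p + 1) := by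
  intro i hi hik M hM hMdisj
  have hMF : M ⊆ F := hM.trans (filter_subset _ _)
  have hleft : #(Icc 1 q \ M.biUnion id) < (s + 1 - #M) * k :=
    hmatch.card_sdiff_biUnion_lt (by omega) hclq hMF hMdisj
  have hused : #(Icc 1 q ∩ M.biUnion id) = #M * i :=
    card_inter_biUnion_of_card_inter_eq hMdisj fun A hA => (mem_filter.1 (hM hA)).2
  have hsplit := card_sdiff_add_card_inter (Icc 1 q) (M.biUnion id)
  rw [hused, Nat.card_Icc] at hsplit
  exact mul_sub_lt_of_le_of_lt (hmatch M hMF hMdisj) (by omega) hpq (by omega)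

theorem stmt_7 (n p s k q : ℕ) (hp : 1 ≤ p) (hs : 1 ≤ s) (hk : 1 ≤ k) (hq : 1 ≤ q)
    (hpq : (s - p) * k + p + 1 ≤ q)
    (F : Finset (Finset ℕ)) (hF : F ⊆ (Finset.Icc 1 n).powersetCard k)
    (hmatch : MatchingLE F s)
    (hclq : (Finset.Icc 1 q).powersetCard k ⊆ F) :
    ∀ i, 1 ≤ i → i ≤ k - 1 →
      ∀ M ⊆ F.filter (fun A => (A ∩ Finset.Icc 1 q).card = i),
        (M : Set (Finset ℕ)).PairwiseDisjoint id →
          M.card * (k - i) < (k - 1) * (p + 1) :=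
  stmt_7_general p s k q hpq F hmatch hclq
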